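/- arXiv:1806.02026 — 2 statements merged into one kernel-verified Lean document; each statement's English description precedes it below -/
import Mathlib

section
/- Let G : ℝ² → Sym₂(ℝ) be α-Hölder continuous (0 < α ≤ 1) with values in positive-definite symmetric matrices with uniform eigenvalue bounds, and set L(u, x) = ⟨x, G(u) x⟩^{-3/2}. Then with β = 3α/4 there is a constant C such that |L(v, v-w) - L(u, v-w)| ≤ C |u - v|^β / |v - w|³ for all u, v, w ∈ ℝ² with v ≠ w. -/
/-!
Both quadratic forms are at least `λ‖x‖²` with `x = v - w`, and by Hölder continuity of the
entries they differ by at most `2 |M| ‖u - v‖^α ‖x‖²`. On `[λ‖x‖², ∞)` the map `q ↦ q^(-3/2)` is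
Lipschitz with constant `(3/2) (λ‖x‖²)^(-5/2)` and bounded by `(λ‖x‖²)^(-3/2)`, so the difference
is at most `‖x‖⁻³ min (3 |M| λ^(-5/2) ‖u - v‖^α) λ^(-3/2)`. For any exponent `0 ≤ β ≤ α` this
minimum is `O(‖u - v‖^β)`: use the first term when `‖u - v‖ ≤ 1`, the second otherwise.
-/

open Real Finset

lemma abs_quadForm_le_card_mul_sq_norm {ι : Type*} [Fintype ι] (A : Matrix ι ι ℝ) {K : ℝ}
    (hK : 0 ≤ K) (hA : ∀ i j, |A i j| ≤ K) (x : EuclideanSpace ℝ ι) :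
    |∑ i, ∑ j, A i j * x i * x j| ≤ Fintype.card ι * K * ‖x‖ ^ 2 := by
  calc |∑ i, ∑ j, A i j * x i * x j| ≤ ∑ i, ∑ j, K * (|x i| * |x j|) := by
        refine (abs_sum_le_sum_abs _ _).trans (sum_le_sum fun i _ => ?_)
        refine (abs_sum_le_sum_abs _ _).trans (sum_le_sum fun j _ => ?_)
        rw [abs_mul, abs_mul, mul_assoc]
        exact mul_le_mul_of_nonneg_right (hA i j) (by positivity)
    _ = K * (∑ i, |x i|) ^ 2 := by rw [sq, sum_mul_sum, mul_sum]; simp only [mul_sum]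
    _ ≤ K * (Fintype.card ι * ∑ i, |x i| ^ 2) :=
        mul_le_mul_of_nonneg_left sq_sum_le_card_mul_sum_sq hK
    _ = Fintype.card ι * K * ‖x‖ ^ 2 := by
        simp only [EuclideanSpace.norm_sq_eq, Real.norm_eq_abs]; ring

lemma abs_quadForm_sub_le_card_mul_sq_norm {ι : Type*} [Fintype ι] (A B : Matrix ι ι ℝ) {K : ℝ}
    (hK : 0 ≤ K) (hAB : ∀ i j, |A i j - B i j| ≤ K) (x : EuclideanSpace ℝ ι) :
    |∑ i, ∑ j, A i j * x i * x j - ∑ i, ∑ j, B i j * x i * x j| ≤ Fintype.card ι * K * ‖x‖ ^ 2 := by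
  simpa only [Matrix.sub_apply, sub_mul, sum_sub_distrib] using
    abs_quadForm_le_card_mul_sq_norm (A - B) hK hAB x

lemma abs_rpow_neg_sub_rpow_neg_le {p m s t : ℝ} (hp : 0 ≤ p) (hm : 0 < m) (hs : m ≤ s)
    (ht : m ≤ t) : |s ^ (-p) - t ^ (-p)| ≤ p * m ^ (-p - 1) * |s - t| := by
  have hderiv : ∀ y ∈ Set.Ici m,
      HasDerivWithinAt (fun y : ℝ => y ^ (-p)) (-p * y ^ (-p - 1)) (Set.Ici m) y :=
    fun y hy => (hasDerivAt_rpow_const (Or.inl (hm.trans_le hy).ne')).hasDerivWithinAt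
  have hbound : ∀ y ∈ Set.Ici m, ‖-p * y ^ (-p - 1)‖ ≤ p * m ^ (-p - 1) := fun y hy => by
    rw [norm_mul, norm_neg, norm_of_nonneg hp, norm_of_nonneg (rpow_nonneg (hm.le.trans hy) _)]
    exact mul_le_mul_of_nonneg_left (rpow_le_rpow_of_nonpos hm hy (by linarith)) hp
  exact (convex_Ici m).norm_image_sub_le_of_norm_hasDerivWithin_le hderiv hbound ht hs

lemma abs_rpow_neg_sub_rpow_neg_le_rpow_neg {p m s t : ℝ} (hp : 0 ≤ p) (hm : 0 < m) (hs : m ≤ s)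
    (ht : m ≤ t) : |s ^ (-p) - t ^ (-p)| ≤ m ^ (-p) :=
  abs_sub_le_of_nonneg_of_le (rpow_nonneg (hm.le.trans hs) _)
    (rpow_le_rpow_of_nonpos hm hs (by linarith)) (rpow_nonneg (hm.le.trans ht) _)
    (rpow_le_rpow_of_nonpos hm ht (by linarith))

lemma min_mul_rpow_le_add_mul_rpow {A B τ α β : ℝ} (hA : 0 ≤ A) (hB : 0 ≤ B) (hτ : 0 ≤ τ)
    (hβ : 0 ≤ β) (hβα : β ≤ α) : min (A * τ ^ α) B ≤ (A + B) * τ ^ β := by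
  rcases le_total τ 1 with hτ1 | hτ1
  · calc min (A * τ ^ α) B ≤ A * τ ^ β :=
          (min_le_left _ _).trans (mul_le_mul_of_nonneg_left
            (rpow_le_rpow_of_exponent_ge' hτ hτ1 hβ hβα) hA)
      _ ≤ (A + B) * τ ^ β := mul_le_mul_of_nonneg_right (by linarith) (rpow_nonneg hτ _)
  · calc min (A * τ ^ α) B ≤ B * 1 := by simp
      _ ≤ (A + B) * τ ^ β :=
          mul_le_mul (by linarith) (one_le_rpow hτ1 hβ) zero_le_one (by linarith)

lemma mul_sq_rpow_neg {lam n : ℝ} (hlam : 0 ≤ lam) (hn : 0 ≤ n) (p : ℝ) :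
    (lam * n ^ 2) ^ (-p) = lam ^ (-p) / n ^ (2 * p) := by
  rw [mul_rpow hlam (by positivity), div_eq_mul_inv, ← rpow_neg hn, ← rpow_natCast_mul hn]
  push_cast; ring_nf

lemma abs_rpow_neg_sub_rpow_neg_le_min_div {p lam n s t D : ℝ} (hp : 0 ≤ p) (hlam : 0 < lam)
    (hn : 0 < n) (hs : lam * n ^ 2 ≤ s) (ht : lam * n ^ 2 ≤ t) (hst : |s - t| ≤ D * n ^ 2) :
    |s ^ (-p) - t ^ (-p)| ≤ min (p * lam ^ (-p - 1) * D) (lam ^ (-p)) / n ^ (2 * p) := by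
  have hm : 0 < lam * n ^ 2 := by positivity
  rw [← min_div_div_right (by positivity)]
  refine le_min ?_ ?_
  · calc |s ^ (-p) - t ^ (-p)| ≤ p * (lam * n ^ 2) ^ (-p - 1) * |s - t| :=
          abs_rpow_neg_sub_rpow_neg_le hp hm hs ht
      _ ≤ p * (lam * n ^ 2) ^ (-p - 1) * (D * n ^ 2) := by gcongr
      _ = p * lam ^ (-p - 1) * D / n ^ (2 * p) := by
          rw [show -p - 1 = -(p + 1) by ring, mul_sq_rpow_neg hlam.le hn.le,
            show 2 * (p + 1) = 2 * p + (2 : ℕ) by push_cast; ring, rpow_add_natCast hn.ne']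
          field_simp
  · rw [← mul_sq_rpow_neg hlam.le hn.le]
    exact abs_rpow_neg_sub_rpow_neg_le_rpow_neg hp hm hs ht

theorem L_first_variable_Holder_general (α M lam Lam : ℝ) (hα0 : 0 < α)
    (hlam : 0 < lam)
    (G : EuclideanSpace ℝ (Fin 2) → Matrix (Fin 2) (Fin 2) ℝ)
    (hHolder : ∀ u v i j, |G u i j - G v i j| ≤ M * ‖u - v‖ ^ α)
    (hbound : ∀ u (x : EuclideanSpace ℝ (Fin 2)),
        lam * ‖x‖ ^ 2 ≤ ∑ i, ∑ j, G u i j * x i * x j ∧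
        (∑ i, ∑ j, G u i j * x i * x j) ≤ Lam * ‖x‖ ^ 2) :
    ∃ C : ℝ, 0 < C ∧ ∀ u v w : EuclideanSpace ℝ (Fin 2), v ≠ w →
      |(∑ i, ∑ j, G v i j * (v - w) i * (v - w) j) ^ (-(3 / 2) : ℝ) -
        (∑ i, ∑ j, G u i j * (v - w) i * (v - w) j) ^ (-(3 / 2) : ℝ)| ≤
        C * ‖u - v‖ ^ (3 * α / 4) / ‖v - w‖ ^ (3 : ℝ) := by
  refine ⟨3 / 2 * lam ^ (-(3 / 2) - 1 : ℝ) * (2 * |M|) + lam ^ (-(3 / 2) : ℝ), by positivity,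
    fun u v w hvw => ?_⟩
  set x := v - w
  have hx : 0 < ‖x‖ := norm_pos_iff.2 (sub_ne_zero.2 hvw)
  have hG : ∀ i j, |G v i j - G u i j| ≤ |M| * ‖u - v‖ ^ α := fun i j => by
    rw [norm_sub_rev]
    exact (hHolder v u i j).trans (by gcongr; exact le_abs_self M)
  have hQ : |∑ i, ∑ j, G v i j * x i * x j - ∑ i, ∑ j, G u i j * x i * x j| ≤
      2 * |M| * ‖u - v‖ ^ α * ‖x‖ ^ 2 := by
    simpa only [Fintype.card_fin, Nat.cast_ofNat, mul_assoc] using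
      abs_quadForm_sub_le_card_mul_sq_norm _ _ (by positivity) hG x
  have hL := abs_rpow_neg_sub_rpow_neg_le_min_div (p := 3 / 2) (by norm_num) hlam hx
    (hbound v x).1 (hbound u x).1 hQ
  rw [show (2 : ℝ) * (3 / 2) = 3 by norm_num, ← mul_assoc] at hL
  exact hL.trans (div_le_div_of_nonneg_right (min_mul_rpow_le_add_mul_rpow (by positivity)
    (by positivity) (norm_nonneg _) (by positivity) (by linarith)) (by positivity))

/-- Hölder continuity of `L(u, x) = ⟨x, G(u) x⟩^{-3/2}` in the first variable:
`|L(v, v-w) - L(u, v-w)| ≤ C |u-v|^{3α/4} / |v-w|³`. -/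
theorem L_first_variable_Holder (α M lam Lam : ℝ) (hα0 : 0 < α) (hα1 : α ≤ 1)
    (hlam : 0 < lam)
    (G : EuclideanSpace ℝ (Fin 2) → Matrix (Fin 2) (Fin 2) ℝ)
    (hsymm : ∀ u, (G u).IsSymm)
    (hHolder : ∀ u v i j, |G u i j - G v i j| ≤ M * ‖u - v‖ ^ α)
    (hbound : ∀ u (x : EuclideanSpace ℝ (Fin 2)),
        lam * ‖x‖ ^ 2 ≤ ∑ i, ∑ j, G u i j * x i * x j ∧
        (∑ i, ∑ j, G u i j * x i * x j) ≤ Lam * ‖x‖ ^ 2) :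
    ∃ C : ℝ, 0 < C ∧ ∀ u v w : EuclideanSpace ℝ (Fin 2), v ≠ w →
      |(∑ i, ∑ j, G v i j * (v - w) i * (v - w) j) ^ (-(3 / 2) : ℝ) -
        (∑ i, ∑ j, G u i j * (v - w) i * (v - w) j) ^ (-(3 / 2) : ℝ)| ≤
        C * ‖u - v‖ ^ (3 * α / 4) / ‖v - w‖ ^ (3 : ℝ) :=
  L_first_variable_Holder_general α M lam Lam hα0 hlam G hHolder hbound
end

section
/- Under the same assumptions on G, define r_j(u, x) = x_j ⟨x, G(u) x⟩^{-3/2} for j = 1, 2. Then with β = 3α/4 there is a constant C such that |r_j(v, v - w) - r_j(u, v - w)| ≤ C |u - v|^β / |v - w|² for all u, v, w with v ≠ w. -/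
-- subadditivity of rpow for p in [0,1] on reals
lemma real_rpow_add_le {x y p : ℝ} (hx : 0 ≤ x) (hy : 0 ≤ y) (hp : 0 ≤ p) (hp1 : p ≤ 1) :
    (x + y) ^ p ≤ x ^ p + y ^ p := by
  have := NNReal.rpow_add_le_add_rpow x.toNNReal y.toNNReal hp hp1
  have h := NNReal.coe_le_coe.mpr this
  push_cast [NNReal.coe_rpow] at h
  rwa [Real.coe_toNNReal _ hx, Real.coe_toNNReal _ hy] at h

-- coordinate bound
lemma coord_le_norm (x : EuclideanSpace ℝ (Fin 2)) (i : Fin 2) : |x i| ≤ ‖x‖ := by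
  rw [EuclideanSpace.norm_eq]
  have h1 : |x i| ^ 2 ≤ ∑ j, ‖x j‖ ^ 2 := by
    have := Finset.single_le_sum (f := fun j => ‖x j‖ ^ 2)
      (fun j _ => by positivity) (Finset.mem_univ i)
    simpa [Real.norm_eq_abs, sq_abs] using this
  calc |x i| = Real.sqrt (|x i| ^ 2) := by rw [Real.sqrt_sq (abs_nonneg _)]
    _ ≤ _ := Real.sqrt_le_sqrt h1

lemma rpow_neg_diff_le {m a b : ℝ} (hm : 0 < m) (ha : m ≤ a) (hb : m ≤ b) (hab : a ≤ b) :
    |a ^ (-(3/2) : ℝ) - b ^ (-(3/2) : ℝ)| ≤ 2 * |a - b| ^ ((3:ℝ)/4) * m ^ (-(9/4) : ℝ) := by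
  have ha0 : 0 < a := hm.trans_le ha
  have hb0 : 0 < b := hm.trans_le hb
  have hdiff : 0 ≤ a ^ (-(3/2) : ℝ) - b ^ (-(3/2) : ℝ) :=
    sub_nonneg.mpr (Real.rpow_le_rpow_of_nonpos ha0 hab (by norm_num))
  rw [abs_of_nonneg hdiff, abs_of_nonpos (sub_nonpos.mpr hab), neg_sub]
  -- b^{3/4} ≤ (b-a)^{3/4} + a^{3/4}
  have hsub : b ^ ((3:ℝ)/4) ≤ (b - a) ^ ((3:ℝ)/4) + a ^ ((3:ℝ)/4) := by
    have := real_rpow_add_le (x := b - a) (y := a) (by linarith) ha0.le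
      (by norm_num : (0:ℝ) ≤ (3:ℝ)/4) (by norm_num)
    simpa using this
  -- key: a^{-3/2} - b^{-3/2} = (b^{3/2} - a^{3/2}) * a^{-3/2} * b^{-3/2}
  have h32a : a ^ ((3:ℝ)/2) * a ^ (-(3/2) : ℝ) = 1 := by
    rw [← Real.rpow_add ha0]; norm_num
  have h32b : b ^ ((3:ℝ)/2) * b ^ (-(3/2) : ℝ) = 1 := by
    rw [← Real.rpow_add hb0]; norm_num
  have hkey : a ^ (-(3/2) : ℝ) - b ^ (-(3/2) : ℝ) =
      (b ^ ((3:ℝ)/2) - a ^ ((3:ℝ)/2)) * (a ^ (-(3/2) : ℝ) * b ^ (-(3/2) : ℝ)) := by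
    linear_combination (b ^ (-(3/2) : ℝ)) * h32a - (a ^ (-(3/2) : ℝ)) * h32b
  -- b^{3/2} - a^{3/2} = (b^{3/4} - a^{3/4})(b^{3/4} + a^{3/4})
  have h34a : a ^ ((3:ℝ)/4) * a ^ ((3:ℝ)/4) = a ^ ((3:ℝ)/2) := by
    rw [← Real.rpow_add ha0]; norm_num
  have h34b : b ^ ((3:ℝ)/4) * b ^ ((3:ℝ)/4) = b ^ ((3:ℝ)/2) := by
    rw [← Real.rpow_add hb0]; norm_num
  have hmono34 : a ^ ((3:ℝ)/4) ≤ b ^ ((3:ℝ)/4) := Real.rpow_le_rpow ha0.le hab (by norm_num)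
  have hfac : b ^ ((3:ℝ)/2) - a ^ ((3:ℝ)/2) ≤ (b - a) ^ ((3:ℝ)/4) * (2 * b ^ ((3:ℝ)/4)) := by
    have h1 : b ^ ((3:ℝ)/2) - a ^ ((3:ℝ)/2)
        = (b ^ ((3:ℝ)/4) - a ^ ((3:ℝ)/4)) * (b ^ ((3:ℝ)/4) + a ^ ((3:ℝ)/4)) := by
      rw [← h34a, ← h34b]; ring
    rw [h1]
    have h2 : b ^ ((3:ℝ)/4) - a ^ ((3:ℝ)/4) ≤ (b - a) ^ ((3:ℝ)/4) := by linarith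
    have h3 : b ^ ((3:ℝ)/4) + a ^ ((3:ℝ)/4) ≤ 2 * b ^ ((3:ℝ)/4) := by linarith
    have hp1 : (0:ℝ) ≤ (b - a) ^ ((3:ℝ)/4) := Real.rpow_nonneg (by linarith) _
    have hp2 : (0:ℝ) ≤ b ^ ((3:ℝ)/4) + a ^ ((3:ℝ)/4) := by positivity
    nlinarith
  -- now bound the product
  have hainv : a ^ (-(3/2) : ℝ) ≤ m ^ (-(3/2) : ℝ) := Real.rpow_le_rpow_of_nonpos hm ha (by norm_num)
  have hbinv : b ^ (-(3/4) : ℝ) ≤ m ^ (-(3/4) : ℝ) := Real.rpow_le_rpow_of_nonpos hm hb (by norm_num)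
  have hb34 : b ^ ((3:ℝ)/4) * b ^ (-(3/2) : ℝ) = b ^ (-(3/4) : ℝ) := by
    rw [← Real.rpow_add hb0]; norm_num
  have hmm : m ^ (-(3/2) : ℝ) * m ^ (-(3/4) : ℝ) = m ^ (-(9/4) : ℝ) := by
    rw [← Real.rpow_add hm]; norm_num
  calc a ^ (-(3/2) : ℝ) - b ^ (-(3/2) : ℝ)
      = (b ^ ((3:ℝ)/2) - a ^ ((3:ℝ)/2)) * (a ^ (-(3/2) : ℝ) * b ^ (-(3/2) : ℝ)) := hkey
    _ ≤ ((b - a) ^ ((3:ℝ)/4) * (2 * b ^ ((3:ℝ)/4))) * (a ^ (-(3/2) : ℝ) * b ^ (-(3/2) : ℝ)) := by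
        apply mul_le_mul_of_nonneg_right hfac
        positivity
    _ = 2 * (b - a) ^ ((3:ℝ)/4) * (a ^ (-(3/2) : ℝ) * (b ^ ((3:ℝ)/4) * b ^ (-(3/2) : ℝ))) := by ring
    _ = 2 * (b - a) ^ ((3:ℝ)/4) * (a ^ (-(3/2) : ℝ) * b ^ (-(3/4) : ℝ)) := by rw [hb34]
    _ ≤ 2 * (b - a) ^ ((3:ℝ)/4) * (m ^ (-(3/2) : ℝ) * m ^ (-(3/4) : ℝ)) := by
        have hba : (0:ℝ) ≤ (b - a) ^ ((3:ℝ)/4) := Real.rpow_nonneg (by linarith) _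
        apply mul_le_mul_of_nonneg_left _ (by nlinarith)
        apply mul_le_mul hainv hbinv (by positivity) (by positivity)
    _ = 2 * (b - a) ^ ((3:ℝ)/4) * m ^ (-(9/4) : ℝ) := by rw [hmm]

lemma rpow_neg_diff_le' {m a b : ℝ} (hm : 0 < m) (ha : m ≤ a) (hb : m ≤ b) :
    |a ^ (-(3/2) : ℝ) - b ^ (-(3/2) : ℝ)| ≤ 2 * |a - b| ^ ((3:ℝ)/4) * m ^ (-(9/4) : ℝ) := by
  rcases le_total a b with h | h
  · exact rpow_neg_diff_le hm ha hb h
  · rw [abs_sub_comm, abs_sub_comm a b]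
    exact rpow_neg_diff_le hm hb ha h

lemma combine_eq (M₁ lam α t n : ℝ) (hM : 0 < M₁) (hlam : 0 < lam) (hα : 0 < α)
    (ht : 0 ≤ t) (hn : 0 < n) :
    n * (2 * (4 * M₁ * t ^ α * n ^ 2) ^ ((3:ℝ)/4) * (lam * n ^ 2) ^ (-(9/4) : ℝ)) =
    (2 * (4 * M₁) ^ ((3:ℝ)/4) * lam ^ (-(9/4) : ℝ)) * t ^ (3 * α / 4) / n ^ (2:ℝ) := by
  have htα : (0:ℝ) ≤ t ^ α := Real.rpow_nonneg ht _
  have h4M : (0:ℝ) ≤ 4 * M₁ := by linarith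
  have hn2 : (0:ℝ) ≤ n ^ 2 := by positivity
  have hdiv : (2 * (4*M₁) ^ ((3:ℝ)/4) * lam ^ (-(9/4):ℝ)) * t ^ (3 * α / 4) / n ^ (2:ℝ)
      = (2 * (4*M₁) ^ ((3:ℝ)/4) * lam ^ (-(9/4):ℝ)) * t ^ (3 * α / 4) * n ^ (-(2:ℝ)) := by
    rw [Real.rpow_neg hn.le]; ring
  rw [hdiv, Real.mul_rpow (by positivity) hn2, Real.mul_rpow h4M htα,
      Real.mul_rpow hlam.le hn2, ← Real.rpow_natCast n 2,
      ← Real.rpow_mul hn.le, ← Real.rpow_mul hn.le, ← Real.rpow_mul ht]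
  have e1 : α * (3/4) = 3 * α / 4 := by ring
  rw [e1]
  have hpow : n * (n ^ (((2:ℕ):ℝ) * (3/4)) * n ^ (((2:ℕ):ℝ) * (-(9/4)))) = n ^ (-(2:ℝ)) := by
    nth_rewrite 1 [← Real.rpow_one n]
    rw [← Real.rpow_add hn, ← Real.rpow_add hn]
    norm_num
  linear_combination (2 * (4*M₁) ^ ((3:ℝ)/4) * t ^ (3 * α / 4) * lam ^ (-(9/4):ℝ)) * hpow

/-- Hölder continuity of `r_j(u, x) = x_j ⟨x, G(u) x⟩^{-3/2}` in the first variable: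
`|r_j(v, v-w) - r_j(u, v-w)| ≤ C |u-v|^{3α/4} / |v-w|²`. -/
theorem r_first_variable_Holder (α M lam Lam : ℝ) (hα0 : 0 < α) (hα1 : α ≤ 1)
    (hlam : 0 < lam)
    (G : EuclideanSpace ℝ (Fin 2) → Matrix (Fin 2) (Fin 2) ℝ)
    (hsymm : ∀ u, (G u).IsSymm)
    (hHolder : ∀ u v i j, |G u i j - G v i j| ≤ M * ‖u - v‖ ^ α)
    (hbound : ∀ u (x : EuclideanSpace ℝ (Fin 2)),
        lam * ‖x‖ ^ 2 ≤ ∑ i, ∑ j, G u i j * x i * x j ∧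
        (∑ i, ∑ j, G u i j * x i * x j) ≤ Lam * ‖x‖ ^ 2) :
    ∃ C : ℝ, 0 < C ∧ ∀ (k : Fin 2) (u v w : EuclideanSpace ℝ (Fin 2)), v ≠ w →
      |(v - w) k * (∑ i, ∑ j, G v i j * (v - w) i * (v - w) j) ^ (-(3 / 2) : ℝ) -
        (v - w) k * (∑ i, ∑ j, G u i j * (v - w) i * (v - w) j) ^ (-(3 / 2) : ℝ)| ≤
        C * ‖u - v‖ ^ (3 * α / 4) / ‖v - w‖ ^ (2 : ℝ) := by
  set M₁ : ℝ := |M| + 1 with hM₁def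
  have hM₁ : 0 < M₁ := by positivity
  refine ⟨2 * (4 * M₁) ^ ((3:ℝ)/4) * lam ^ (-(9/4) : ℝ), by positivity, ?_⟩
  intro k u v w hvw
  set x : EuclideanSpace ℝ (Fin 2) := v - w with hxdef
  have hx : x ≠ 0 := sub_ne_zero.mpr hvw
  have hn : 0 < ‖x‖ := norm_pos_iff.mpr hx
  set a : ℝ := ∑ i, ∑ j, G v i j * x i * x j with hadef
  set b : ℝ := ∑ i, ∑ j, G u i j * x i * x j with hbdef
  have ha : lam * ‖x‖ ^ 2 ≤ a := (hbound v x).1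
  have hb : lam * ‖x‖ ^ 2 ≤ b := (hbound u x).1
  have hm : 0 < lam * ‖x‖ ^ 2 := by positivity
  have ht : (0:ℝ) ≤ ‖u - v‖ ^ α := Real.rpow_nonneg (norm_nonneg _) _
  -- Hölder bound on |a - b|
  have key : ∀ i j : Fin 2, |G v i j * x i * x j - G u i j * x i * x j|
      ≤ M₁ * ‖u - v‖ ^ α * (‖x‖ * ‖x‖) := by
    intro i j
    have h1 : |G v i j - G u i j| ≤ M₁ * ‖u - v‖ ^ α := by
      have h := hHolder v u i j
      rw [norm_sub_rev] at h
      have : M * ‖u - v‖ ^ α ≤ M₁ * ‖u - v‖ ^ α := by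
        apply mul_le_mul_of_nonneg_right _ ht
        have := le_abs_self M; linarith
      linarith
    have h2 : |x i| ≤ ‖x‖ := coord_le_norm x i
    have h3 : |x j| ≤ ‖x‖ := coord_le_norm x j
    calc |G v i j * x i * x j - G u i j * x i * x j|
        = |G v i j - G u i j| * (|x i| * |x j|) := by
          rw [← abs_mul, ← abs_mul]
          congr 1
          ring
      _ ≤ M₁ * ‖u - v‖ ^ α * (‖x‖ * ‖x‖) := by
          apply mul_le_mul h1 _ (by positivity) (by positivity)
          exact mul_le_mul h2 h3 (abs_nonneg _) (norm_nonneg _)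
  have habs : |a - b| ≤ 4 * M₁ * ‖u - v‖ ^ α * ‖x‖ ^ 2 := by
    have hab : a - b = ∑ i, ∑ j, (G v i j * x i * x j - G u i j * x i * x j) := by
      rw [hadef, hbdef, ← Finset.sum_sub_distrib]
      exact Finset.sum_congr rfl fun i _ => by rw [← Finset.sum_sub_distrib]
    rw [hab]
    calc |∑ i, ∑ j, (G v i j * x i * x j - G u i j * x i * x j)|
        ≤ ∑ i, |∑ j, (G v i j * x i * x j - G u i j * x i * x j)| :=
          Finset.abs_sum_le_sum_abs _ _
      _ ≤ ∑ i : Fin 2, ∑ j : Fin 2, |G v i j * x i * x j - G u i j * x i * x j| :=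
          Finset.sum_le_sum fun i _ => Finset.abs_sum_le_sum_abs _ _
      _ ≤ ∑ _i : Fin 2, ∑ _j : Fin 2, M₁ * ‖u - v‖ ^ α * (‖x‖ * ‖x‖) :=
          Finset.sum_le_sum fun i _ => Finset.sum_le_sum fun j _ => key i j
      _ = 4 * M₁ * ‖u - v‖ ^ α * ‖x‖ ^ 2 := by
          simp [Finset.sum_const]; ring
  have hdd := rpow_neg_diff_le' hm ha hb
  have hcoord := coord_le_norm x k
  calc |x k * a ^ (-(3/2) : ℝ) - x k * b ^ (-(3/2) : ℝ)|
      = |x k| * |a ^ (-(3/2) : ℝ) - b ^ (-(3/2) : ℝ)| := by rw [← mul_sub, abs_mul]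
    _ ≤ ‖x‖ * (2 * |a - b| ^ ((3:ℝ)/4) * (lam * ‖x‖ ^ 2) ^ (-(9/4) : ℝ)) :=
        mul_le_mul hcoord hdd (abs_nonneg _) (norm_nonneg _)
    _ ≤ ‖x‖ * (2 * (4 * M₁ * ‖u - v‖ ^ α * ‖x‖ ^ 2) ^ ((3:ℝ)/4) *
          (lam * ‖x‖ ^ 2) ^ (-(9/4) : ℝ)) := by
        apply mul_le_mul_of_nonneg_left _ (norm_nonneg _)
        apply mul_le_mul_of_nonneg_right _ (by positivity)
        apply mul_le_mul_of_nonneg_left _ (by norm_num)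
        exact Real.rpow_le_rpow (abs_nonneg _) habs (by norm_num)
    _ = 2 * (4 * M₁) ^ ((3:ℝ)/4) * lam ^ (-(9/4) : ℝ) * ‖u - v‖ ^ (3 * α / 4) /
          ‖x‖ ^ (2:ℝ) :=
        combine_eq M₁ lam α ‖u - v‖ ‖x‖ hM₁ hlam hα0 (norm_nonneg _) hn
end
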